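/- arXiv:2204.00667 — 3 statements merged into one kernel-verified Lean document; each statement's English description precedes it below -/
import Mathlib

section
/- The map U: Y⊕_Ω X → Dom Ω ⊕_{Ω⁻¹} Ran Ω defined by U(β,x) = (x,β) is a bijective bounded operator (hence isomorphism) making the exact sequences 0 → Dom Ω → Y⊕_Ω X → Ran Ω → 0 and 0 → Dom Ω → Dom Ω ⊕_{Ω⁻¹} Ran Ω → Ran Ω → 0 equivalent; explicitly, ‖U(β,x)‖_{Ω⁻¹} ≤ (C+C‖B‖+1)‖(β,x)‖_Ω where B is the bounded selection defining Ω⁻¹ and C the modulus of concavity. -/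
noncomputable section

open scoped Classical BigOperators

section Defs

variable {X Y S : Type*} [NormedAddCommGroup X] [NormedSpace ℝ X]
  [NormedAddCommGroup Y] [NormedSpace ℝ Y] [AddCommGroup S] [Module ℝ S]

/-- The norm of `σ ∈ S` viewed as an element of `Y` through the embedding `ι`
(junk value `0` if `σ` is not in the image of `Y`). -/
noncomputable def Ynorm (ι : Y →ₗ[ℝ] S) (σ : S) : ℝ :=
  if h : ∃ y : Y, ι y = σ then ‖Classical.choose h‖ else 0

/-- `Ω : X ↷ Y` is quasilinear with ambient space `S` and constant `C`. -/
def IsQL (ι : Y →ₗ[ℝ] S) (Ω : X → S) (C : ℝ) : Prop :=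
  (∀ (c : ℝ) (x : X), Ω (c • x) = c • Ω x) ∧
  ∀ x z : X, (∃ y : Y, ι y = Ω (x + z) - Ω x - Ω z) ∧
    Ynorm ι (Ω (x + z) - Ω x - Ω z) ≤ C * (‖x‖ + ‖z‖)

/-- `Ω : X ↷ Y` is `1`-quasilinear with ambient space `S` and constant `C`. -/
def IsOneQL (ι : Y →ₗ[ℝ] S) (Ω : X → S) (C : ℝ) : Prop :=
  (∀ (c : ℝ) (x : X), Ω (c • x) = c • Ω x) ∧
  ∀ (n : ℕ) (f : Fin n → X),
    (∃ y : Y, ι y = Ω (∑ i, f i) - ∑ i, Ω (f i)) ∧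
      Ynorm ι (Ω (∑ i, f i) - ∑ i, Ω (f i)) ≤ C * ∑ i, ‖f i‖

/-- The twisted sum `Y ⊕_Ω X = {(β, x) : β - Ωx ∈ Y}`, as a subset of `S × X`. -/
def TwSum (ι : Y →ₗ[ℝ] S) (Ω : X → S) : Set (S × X) :=
  {p | ∃ y : Y, ι y = p.1 - Ω p.2}

/-- The quasinorm `‖(β, x)‖_Ω = ‖β - Ωx‖_Y + ‖x‖_X` of the twisted sum. -/
noncomputable def tnorm (ι : Y →ₗ[ℝ] S) (Ω : X → S) (p : S × X) : ℝ :=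
  Ynorm ι (p.1 - Ω p.2) + ‖p.2‖

/-- `Dom Ω = {x ∈ X : Ωx ∈ Y}`. -/
def QDom (ι : Y →ₗ[ℝ] S) (Ω : X → S) : Set X :=
  {x | ∃ y : Y, ι y = Ω x}

/-- `‖x‖_D = ‖x‖_X + ‖Ωx‖_Y`. -/
noncomputable def domNorm (ι : Y →ₗ[ℝ] S) (Ω : X → S) (x : X) : ℝ :=
  ‖x‖ + Ynorm ι (Ω x)

/-- `Ran Ω = {β ∈ S : ∃ x ∈ X, β - Ωx ∈ Y}`. -/
def QRan (ι : Y →ₗ[ℝ] S) (Ω : X → S) : Set S :=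
  {σ | ∃ x : X, (σ, x) ∈ TwSum ι Ω}

/-- `‖β‖_R = inf {‖(β, x)‖_Ω : (β, x) ∈ Y ⊕_Ω X}`. -/
noncomputable def ranNorm (ι : Y →ₗ[ℝ] S) (Ω : X → S) (σ : S) : ℝ :=
  sInf (tnorm ι Ω '' {p : S × X | p.1 = σ ∧ p ∈ TwSum ι Ω})

end Defs

section Aux

variable {X Y S : Type*} [NormedAddCommGroup X] [NormedSpace ℝ X]
  [NormedAddCommGroup Y] [NormedSpace ℝ Y] [AddCommGroup S] [Module ℝ S]
  {ι : Y →ₗ[ℝ] S}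

lemma Ynorm_eq (hinj : Function.Injective ι) (y : Y) : Ynorm ι (ι y) = ‖y‖ := by
  have h : ∃ y' : Y, ι y' = ι y := ⟨y, rfl⟩
  rw [Ynorm, dif_pos h, hinj (Classical.choose_spec h)]

lemma Ynorm_nonneg (ι : Y →ₗ[ℝ] S) (σ : S) : 0 ≤ Ynorm ι σ := by
  rw [Ynorm]
  split_ifs with h
  · exact norm_nonneg _
  · exact le_refl 0

lemma Ynorm_zero (hinj : Function.Injective ι) : Ynorm ι 0 = 0 := by
  simpa using Ynorm_eq hinj 0

lemma Ynorm_neg (hinj : Function.Injective ι) (σ : S) : Ynorm ι (-σ) = Ynorm ι σ := by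
  by_cases h : ∃ y : Y, ι y = σ
  · obtain ⟨y, rfl⟩ := h
    rw [← map_neg, Ynorm_eq hinj, Ynorm_eq hinj, norm_neg]
  · have h' : ¬ ∃ y : Y, ι y = -σ := by
      rintro ⟨y, hy⟩
      exact h ⟨-y, by rw [map_neg, hy, neg_neg]⟩
    rw [Ynorm, Ynorm, dif_neg h, dif_neg h']

lemma tnorm_nonneg (ι : Y →ₗ[ℝ] S) (Ω : X → S) (p : S × X) : 0 ≤ tnorm ι Ω p :=
  add_nonneg (Ynorm_nonneg ι _) (norm_nonneg _)

lemma ranNorm_nonneg (ι : Y →ₗ[ℝ] S) (Ω : X → S) (σ : S) : 0 ≤ ranNorm ι Ω σ := by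
  apply Real.sInf_nonneg
  rintro a ⟨p, -, rfl⟩
  exact tnorm_nonneg ι Ω p

lemma ranNorm_le (ι : Y →ₗ[ℝ] S) (Ω : X → S) {σ : S} {x : X}
    (h : (σ, x) ∈ TwSum ι Ω) : ranNorm ι Ω σ ≤ tnorm ι Ω (σ, x) := by
  apply csInf_le
  · exact ⟨0, by rintro a ⟨p, -, rfl⟩; exact tnorm_nonneg ι Ω p⟩
  · exact ⟨(σ, x), ⟨rfl, h⟩, rfl⟩

end Aux

/-- The map `U(β, x) = (x, β)` is a bijective bounded operator from
`Y ⊕_Ω X` onto `Dom Ω ⊕_{Ω⁻¹} Ran Ω` making the two exact sequences equivalent;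
explicitly `‖U(β,x)‖_{Ω⁻¹} ≤ (C + C‖B‖ + 1)‖(β,x)‖_Ω`, where `B` is the bounded
selection defining `Ω⁻¹` and `C` the modulus of concavity of `‖·‖_Ω`. -/
theorem stmt7 {X Y S : Type*} [NormedAddCommGroup X] [NormedSpace ℝ X]
    [NormedAddCommGroup Y] [NormedSpace ℝ Y] [AddCommGroup S] [Module ℝ S]
    (ι : Y →ₗ[ℝ] S) (hinj : Function.Injective ι)
    (Ω : X → S) (C₀ : ℝ) (hq : IsQL ι Ω C₀)
    (Oinv : S → X) (K : ℝ) (hK : 0 < K)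
    (hhom : ∀ (c : ℝ) (σ : S), Oinv (c • σ) = c • Oinv σ)
    (hsel : ∀ σ ∈ QRan ι Ω, (σ, Oinv σ) ∈ TwSum ι Ω ∧
      tnorm ι Ω (σ, Oinv σ) ≤ K * ranNorm ι Ω σ)
    -- `C` is the modulus of concavity of the quasinorm of `Y ⊕_Ω X`
    (C : ℝ) (hC : ∀ p q : S × X, tnorm ι Ω (p + q) ≤ C * (tnorm ι Ω p + tnorm ι Ω q)) :
    -- U maps the twisted sum into Dom Ω ⊕_{Ω⁻¹} Ran Ω, with the norm estimate
    (∀ p ∈ TwSum ι Ω, (p.1 ∈ QRan ι Ω ∧ p.2 - Oinv p.1 ∈ QDom ι Ω) ∧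
      domNorm ι Ω (p.2 - Oinv p.1) + ranNorm ι Ω p.1 ≤ (C + C * K + 1) * tnorm ι Ω p) ∧
    -- U is surjective (it is obviously injective, being a restriction of the swap map)
    (∀ (x : X) (σ : S), σ ∈ QRan ι Ω → x - Oinv σ ∈ QDom ι Ω → (σ, x) ∈ TwSum ι Ω) ∧
    -- the inverse of U is bounded
    (∃ D : ℝ, ∀ p ∈ TwSum ι Ω,
      tnorm ι Ω p ≤ D * (domNorm ι Ω (p.2 - Oinv p.1) + ranNorm ι Ω p.1)) := by
  obtain ⟨hhomΩ, hqlΩ⟩ := hq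
  have hΩ0 : Ω 0 = 0 := by simpa using hhomΩ 0 0
  have hOinv0 : Oinv 0 = 0 := by simpa using hhom 0 0
  have hΩneg : ∀ x : X, Ω (-x) = -Ω x := fun x => by simpa using hhomΩ (-1) x
  have htzero : tnorm ι Ω (0 : S × X) = 0 := by
    simp [tnorm, hΩ0, Ynorm_zero hinj]
  have hdom : ∀ x : X, tnorm ι Ω ((0 : S), x) = domNorm ι Ω x := by
    intro x
    rw [tnorm, domNorm]
    simp only [zero_sub, Ynorm_neg hinj]
    ring
  refine ⟨?_, ?_, ?_⟩
  · -- boundedness of U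
    rintro ⟨β, x⟩ ⟨y₀, hy₀⟩
    have hy₀' : ι y₀ = β - Ω x := hy₀
    have hβran : β ∈ QRan ι Ω := ⟨x, y₀, hy₀⟩
    obtain ⟨⟨y₁, hy₁⟩, hselnorm⟩ := hsel β hβran
    have hy₁' : ι y₁ = β - Ω (Oinv β) := hy₁
    obtain ⟨⟨y₂, hy₂⟩, -⟩ := hqlΩ (x - Oinv β) (Oinv β)
    rw [sub_add_cancel] at hy₂
    have hdommem : x - Oinv β ∈ QDom ι Ω := by
      refine ⟨-y₀ + y₁ - y₂, ?_⟩
      rw [map_sub, map_add, map_neg, hy₀', hy₁', hy₂]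
      abel
    refine ⟨⟨hβran, hdommem⟩, ?_⟩
    show domNorm ι Ω (x - Oinv β) + ranNorm ι Ω β ≤ (C + C * K + 1) * tnorm ι Ω (β, x)
    have hsum : (β, x) + (-β, -(Oinv β)) = ((0 : S), x - Oinv β) := by
      have h2 : x + -(Oinv β) = x - Oinv β := by abel
      simp [Prod.mk_add_mk, h2]
    have htneg : tnorm ι Ω (-β, -(Oinv β)) = tnorm ι Ω (β, Oinv β) := by
      simp only [tnorm, hΩneg]
      rw [show -β - -Ω (Oinv β) = -(β - Ω (Oinv β)) by abel, Ynorm_neg hinj, norm_neg]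
    have hd : domNorm ι Ω (x - Oinv β) ≤
        C * (tnorm ι Ω (β, x) + tnorm ι Ω (β, Oinv β)) := by
      have h := hC (β, x) (-β, -(Oinv β))
      rwa [hsum, htneg, hdom] at h
    have hq' : tnorm ι Ω (β, Oinv β) ≤ K * ranNorm ι Ω β := hselnorm
    have hr : ranNorm ι Ω β ≤ tnorm ι Ω (β, x) := ranNorm_le ι Ω ⟨y₀, hy₀⟩
    have hrnn := ranNorm_nonneg ι Ω β
    have htnn := tnorm_nonneg ι Ω (β, x)
    have hqnn := tnorm_nonneg ι Ω (β, Oinv β)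
    rcases eq_or_lt_of_le htnn with h0 | h0
    · -- degenerate case: the norm of p is zero, so p = 0
      have ht : Ynorm ι (β - Ω x) + ‖x‖ = 0 := h0.symm
      have hynn := Ynorm_nonneg ι (β - Ω x)
      have hx0 : x = 0 := norm_eq_zero.mp (le_antisymm (by linarith) (norm_nonneg x))
      have hy00 : y₀ = 0 := by
        have : Ynorm ι (β - Ω x) = ‖y₀‖ := by rw [← hy₀', Ynorm_eq hinj]
        have hn : ‖y₀‖ = 0 := by linarith [norm_nonneg x]
        exact norm_eq_zero.mp hn
      have hβ0 : β = 0 := by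
        have : (0 : S) = β - Ω x := by rw [← hy₀', hy00, map_zero]
        rw [hx0, hΩ0, sub_zero] at this
        exact this.symm
      subst hx0; subst hβ0
      have hd0 : domNorm ι Ω ((0 : X) - Oinv 0) = 0 := by
        rw [hOinv0, sub_zero, domNorm, hΩ0, Ynorm_zero hinj, norm_zero, add_zero]
      have hran0 : ranNorm ι Ω (0 : S) ≤ 0 := by
        have hmem : ((0 : S), (0 : X)) ∈ TwSum ι Ω := ⟨0, by simp [hΩ0]⟩
        have h := ranNorm_le ι Ω hmem
        have ht00 : tnorm ι Ω ((0 : S), (0 : X)) = 0 := htzero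
        linarith [h, ht00.le, ht00.ge]
      have ht00 : tnorm ι Ω ((0 : S), (0 : X)) = 0 := htzero
      rw [hd0, ht00, mul_zero]
      linarith [ranNorm_nonneg ι Ω (0 : S)]
    · -- nondegenerate case: C ≥ 1
      have hC1 : 1 ≤ C := by
        have h := hC (β, x) 0
        rw [add_zero, htzero, add_zero] at h
        nlinarith
      nlinarith [mul_le_mul_of_nonneg_left hq' (by linarith : (0 : ℝ) ≤ C),
        mul_le_mul_of_nonneg_left hr (mul_nonneg (by linarith : (0 : ℝ) ≤ C) hK.le)]
  · -- surjectivity of U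
    rintro x σ hσ ⟨y₃, hy₃⟩
    obtain ⟨⟨y₁, hy₁⟩, -⟩ := hsel σ hσ
    have hy₁' : ι y₁ = σ - Ω (Oinv σ) := hy₁
    obtain ⟨⟨y₂, hy₂⟩, -⟩ := hqlΩ (x - Oinv σ) (Oinv σ)
    rw [sub_add_cancel] at hy₂
    refine ⟨y₁ - y₂ - y₃, ?_⟩
    show ι (y₁ - y₂ - y₃) = σ - Ω x
    rw [map_sub, map_sub, hy₁', hy₂, hy₃]
    abel
  · -- boundedness of the inverse of U
    refine ⟨|C| * (K + 1), ?_⟩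
    rintro ⟨β, x⟩ ⟨y₀, hy₀⟩
    have hβran : β ∈ QRan ι Ω := ⟨x, y₀, hy₀⟩
    obtain ⟨-, hq'⟩ := hsel β hβran
    show tnorm ι Ω (β, x) ≤ |C| * (K + 1) * (domNorm ι Ω (x - Oinv β) + ranNorm ι Ω β)
    have hsum2 : ((β : S), Oinv β) + ((0 : S), x - Oinv β) = (β, x) := by
      have h2 : Oinv β + (x - Oinv β) = x := by abel
      simp [Prod.mk_add_mk, h2]
    have h := hC (β, Oinv β) ((0 : S), x - Oinv β)
    rw [hsum2, hdom] at h
    have hdnn : 0 ≤ domNorm ι Ω (x - Oinv β) :=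
      add_nonneg (norm_nonneg _) (Ynorm_nonneg ι _)
    have hrnn := ranNorm_nonneg ι Ω β
    have hqnn := tnorm_nonneg ι Ω (β, Oinv β)
    have habs : C * (tnorm ι Ω (β, Oinv β) + domNorm ι Ω (x - Oinv β)) ≤
        |C| * (tnorm ι Ω (β, Oinv β) + domNorm ι Ω (x - Oinv β)) :=
      mul_le_mul_of_nonneg_right (le_abs_self C) (add_nonneg hqnn hdnn)
    nlinarith [mul_le_mul_of_nonneg_left hq' (abs_nonneg C),
      mul_nonneg (abs_nonneg C) (add_nonneg (mul_nonneg hK.le hdnn) hrnn)]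
end
end

section
/- Let Ω: X ↷ Y be 1-quasilinear with dense domain and let Ω*: Y* → (Dom Ω)* be defined via J*B y* = (Ω*y*, y*) where B is a bounded homogeneous selection for the quotient map ι₁*: (Y⊕_Ω X)* → Y*. Then Ω* is 1-quasilinear from Y* to X* with ambient space (Dom Ω)*: for every finite family y₁*,…,yₙ* ∈ Y*, ΣΩ*(yᵢ*) − Ω*(Σyᵢ*) ∈ X* and ‖ΣΩ*(yᵢ*) − Ω*(Σyᵢ*)‖_{X*} ≤ 2‖B‖ Σ‖yᵢ*‖_{Y*}. -/
noncomputable section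

open scoped Classical BigOperators

/-- Let `Ω : X ↷ Y` be `1`-quasilinear with dense domain and let
`Ω* y* := (B y*) ∘ ι₂` (i.e. `J* B y* = (Ω* y*, y*)`), where `B` is a bounded
homogeneous selection for the quotient map `ι₁* : (Y ⊕_Ω X)* → Y*`
(functionals on the twisted sum being represented as linear functionals on `S × X`
bounded with respect to `‖·‖_Ω` on `Y ⊕_Ω X`). Then `Ω*` is `1`-quasilinear from
`Y*` to `X*` with ambient space `(Dom Ω)*`: for finite families `y₁*, …, yₙ*`,
`Σ Ω*(yᵢ*) - Ω*(Σ yᵢ*) ∈ X*` with norm at most `2‖B‖ Σ ‖yᵢ*‖`. -/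
theorem stmt11 {X Y S : Type*} [NormedAddCommGroup X] [NormedSpace ℝ X] [CompleteSpace X]
    [NormedAddCommGroup Y] [NormedSpace ℝ Y] [CompleteSpace Y]
    [AddCommGroup S] [Module ℝ S]
    (ι : Y →ₗ[ℝ] S) (hinj : Function.Injective ι)
    (Ω : X → S) (C : ℝ) (hq : IsOneQL ι Ω C)
    (hdense : ∀ x : X, ∀ ε > (0 : ℝ), ∃ z ∈ QDom ι Ω, ‖x - z‖ < ε)
    -- B is a bounded homogeneous selection for ι₁* with ‖B‖ ≤ K
    (B : (Y →L[ℝ] ℝ) → (S × X →ₗ[ℝ] ℝ)) (K : ℝ) (hK : 0 < K)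
    (hBhom : ∀ (c : ℝ) (g : Y →L[ℝ] ℝ), B (c • g) = c • B g)
    (hBsel : ∀ (g : Y →L[ℝ] ℝ) (y : Y), B g (ι y, (0 : X)) = g y)
    (hBbdd : ∀ (g : Y →L[ℝ] ℝ), ∀ p ∈ TwSum ι Ω, |B g p| ≤ K * ‖g‖ * tnorm ι Ω p) :
    -- Ω* y* := x ↦ B y* (0, x) is homogeneous
    (∀ (c : ℝ) (g : Y →L[ℝ] ℝ) (x : X),
      B (c • g) ((0 : S), x) = c * B g ((0 : S), x)) ∧
    -- and Ω* is 1-quasilinear into X* : Σ Ω*(yᵢ*) - Ω*(Σ yᵢ*) ∈ X*, bounded on the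
    -- dense subspace Dom Ω by 2‖B‖ (Σ ‖yᵢ*‖) ‖x‖_X
    (∀ (n : ℕ) (g : Fin n → (Y →L[ℝ] ℝ)), ∀ x ∈ QDom ι Ω,
      |(∑ i, B (g i) ((0 : S), x)) - B (∑ i, g i) ((0 : S), x)| ≤
        2 * K * (∑ i, ‖g i‖) * ‖x‖) := by

  constructor
  · intro c g x
    rw [hBhom]; rfl
  · intro n g x hx
    obtain ⟨y, hy⟩ := hx
    have hp : ((Ω x, x) : S × X) ∈ TwSum ι Ω := ⟨0, by simp [TwSum]⟩
    have htn : tnorm ι Ω (Ω x, x) = ‖x‖ := by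
      have h0 : Ynorm ι (0 : S) = 0 := by
        unfold Ynorm
        rw [dif_pos ⟨0, map_zero ι⟩]
        have hc : Classical.choose (⟨0, map_zero ι⟩ : ∃ z : Y, ι z = 0) = 0 := by
          apply hinj
          rw [Classical.choose_spec (⟨0, map_zero ι⟩ : ∃ z : Y, ι z = 0), map_zero]
        simp [hc]
      simp [tnorm, sub_self, h0]
    have key : ∀ h : Y →L[ℝ] ℝ, B h ((0:S), x) = B h (Ω x, x) - h y := by
      intro h
      have hsplit : ((Ω x, x) : S × X) = (ι y, (0:X)) + ((0:S), x) := by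
        simp [Prod.ext_iff, hy]
      rw [hsplit, map_add, hBsel]
      ring
    have hb : ∀ h : Y →L[ℝ] ℝ, |B h (Ω x, x)| ≤ K * ‖h‖ * ‖x‖ := by
      intro h
      have := hBbdd h _ hp
      rwa [htn] at this
    have heq : (∑ i, B (g i) ((0 : S), x)) - B (∑ i, g i) ((0 : S), x)
        = (∑ i, B (g i) (Ω x, x)) - B (∑ i, g i) (Ω x, x) := by
      simp only [key]
      rw [Finset.sum_sub_distrib]
      have : (∑ i, g i) y = ∑ i, g i y := by
        simp
      rw [this]
      ring
    rw [heq]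
    have h1 : |∑ i, B (g i) (Ω x, x)| ≤ K * (∑ i, ‖g i‖) * ‖x‖ := by
      calc |∑ i, B (g i) (Ω x, x)| ≤ ∑ i, |B (g i) (Ω x, x)| :=
            Finset.abs_sum_le_sum_abs _ _
        _ ≤ ∑ i, K * ‖g i‖ * ‖x‖ := Finset.sum_le_sum fun i _ => hb (g i)
        _ = K * (∑ i, ‖g i‖) * ‖x‖ := by rw [← Finset.sum_mul, ← Finset.mul_sum]
    have h2 : |B (∑ i, g i) (Ω x, x)| ≤ K * (∑ i, ‖g i‖) * ‖x‖ := by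
      refine (hb _).trans ?_
      have h3 := norm_sum_le Finset.univ g
      have hx0 : (0:ℝ) ≤ ‖x‖ := norm_nonneg x
      nlinarith [mul_le_mul_of_nonneg_right (mul_le_mul_of_nonneg_left h3 hK.le) hx0]
    calc |(∑ i, B (g i) (Ω x, x)) - B (∑ i, g i) (Ω x, x)|
        ≤ |∑ i, B (g i) (Ω x, x)| + |B (∑ i, g i) (Ω x, x)| := abs_sub _ _
      _ ≤ K * (∑ i, ‖g i‖) * ‖x‖ + K * (∑ i, ‖g i‖) * ‖x‖ := add_le_add h1 h2
      _ = 2 * K * (∑ i, ‖g i‖) * ‖x‖ := by ring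
end
end

section
/- For the Kalton–Peck map KP(x) = 2·x·log(|x|/‖x‖₂) on ℓ₂ (with convention KP(0)=0 and 0·log 0 = 0), KP is quasilinear: for all x, z ∈ ℓ₂, KP(x+z) − KP(x) − KP(z) ∈ ℓ₂ and ‖KP(x+z) − KP(x) − KP(z)‖₂ ≤ C(‖x‖₂ + ‖z‖₂) for some absolute constant C. -/
noncomputable section

/-- The Kalton–Peck map on `ℓ₂`: `KP x = 2 · x · log(|x|/‖x‖₂)` coordinatewise,
with the conventions `KP 0 = 0` and `0 · log 0 = 0` (in Lean, `x/0 = 0` and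
`Real.log 0 = 0`, which implement these conventions). -/
def KP (x : lp (fun _ : ℕ => ℝ) 2) : ℕ → ℝ :=
  fun n => 2 * x n * Real.log (|x n| / ‖x‖)


private lemma hp2 : 0 < (2:ENNReal).toReal := by norm_num

private lemma ylog_le {y M : ℝ} (hy : 0 ≤ y) (hM : 0 < M) : y * Real.log (M / y) ≤ M := by
  rcases hy.eq_or_lt with h | h
  · rw [← h]; simpa using hM.le
  · have hpos : 0 < M / y := div_pos hM h
    have hlog := Real.log_le_sub_one_of_pos hpos
    have h2 := mul_le_mul_of_nonneg_left hlog h.le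
    have hMy : y * (M / y - 1) = M - y := by field_simp
    nlinarith

private lemma phi_bound_aux (a b : ℝ) (hab : |a| ≤ |b|) :
    abs ((a+b) * Real.log |a+b| - a * Real.log |a| - b * Real.log |b|) ≤ 3 * |b| := by
  rcases eq_or_ne a 0 with ha | ha
  · subst ha
    simp [abs_nonneg]
  have hb : b ≠ 0 := by
    intro h; rw [h] at hab; simp at hab; exact ha hab
  have hapos : 0 < |a| := abs_pos.mpr ha
  have hbpos : 0 < |b| := abs_pos.mpr hb
  rcases eq_or_ne (a + b) 0 with hc | hc
  · have hba : b = -a := by linarith [hc]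
    subst hba
    simp [abs_neg]
  have hcpos : 0 < |a+b| := abs_pos.mpr hc
  have key : (a+b) * Real.log |a+b| - a * Real.log |a| - b * Real.log |b|
      = a * (Real.log |b| - Real.log |a|) + (a+b) * (Real.log |a+b| - Real.log |b|) := by
    ring
  rw [key]
  have hT1 : |a * (Real.log |b| - Real.log |a|)| ≤ |b| := by
    have hdiff : Real.log |b| - Real.log |a| = Real.log (|b| / |a|) :=
      (Real.log_div (abs_ne_zero.mpr hb) (abs_ne_zero.mpr ha)).symm
    have hnn : 0 ≤ Real.log (|b| / |a|) :=
      Real.log_nonneg ((one_le_div hapos).mpr hab)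
    rw [abs_mul, hdiff, abs_of_nonneg hnn]
    exact ylog_le hapos.le hbpos
  have hT2 : |(a+b) * (Real.log |a+b| - Real.log |b|)| ≤ 2 * |b| := by
    have hdiff : Real.log |a+b| - Real.log |b| = Real.log (|a+b| / |b|) :=
      (Real.log_div (abs_ne_zero.mpr hc) (abs_ne_zero.mpr hb)).symm
    rcases le_total |a+b| |b| with hle | hle
    · have hnn : Real.log (|a+b| / |b|) ≤ 0 := by
        apply Real.log_nonpos (by positivity)
        exact (div_le_one hbpos).mpr hle
      rw [abs_mul, hdiff, abs_of_nonpos hnn]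
      have : Real.log (|a+b| / |b|) = - Real.log (|b| / |a+b|) := by
        rw [Real.log_div (abs_ne_zero.mpr hc) (abs_ne_zero.mpr hb),
            Real.log_div (abs_ne_zero.mpr hb) (abs_ne_zero.mpr hc)]; ring
      rw [this, neg_neg]
      have := ylog_le hcpos.le hbpos
      linarith
    · have hnn : 0 ≤ Real.log (|a+b| / |b|) :=
        Real.log_nonneg ((one_le_div hbpos).mpr hle)
      rw [abs_mul, hdiff, abs_of_nonneg hnn]
      have hcb : |a+b| ≤ 2 * |b| := (abs_add_le a b).trans (by linarith)
      have hlog : Real.log (|a+b| / |b|) ≤ |a+b| / |b| - 1 :=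
        Real.log_le_sub_one_of_pos (by positivity)
      have h3 : |a+b| * Real.log (|a+b|/|b|) ≤ |a+b| * (|a+b|/|b| - 1) :=
        mul_le_mul_of_nonneg_left hlog hcpos.le
      have h4 : |a+b| * (|a+b|/|b| - 1) = |a+b|^2/|b| - |a+b| := by ring
      rw [h4] at h3
      have h5 : |a+b|^2 / |b| ≤ 2*|b| + |a+b| := by
        rw [div_le_iff₀ hbpos]
        nlinarith [mul_nonneg (sub_nonneg.mpr hcb) (sub_nonneg.mpr hle)]
      linarith
  calc abs (a * (Real.log |b| - Real.log |a|) + (a+b) * (Real.log |a+b| - Real.log |b|))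
      ≤ abs (a * (Real.log |b| - Real.log |a|)) + abs ((a+b) * (Real.log |a+b| - Real.log |b|)) := abs_add_le _ _
    _ ≤ 3 * |b| := by linarith

private lemma phi_bound (a b : ℝ) :
    abs ((a+b) * Real.log |a+b| - a * Real.log |a| - b * Real.log |b|) ≤ 3 * (|a| + |b|) := by
  rcases le_total |a| |b| with h | h
  · have := phi_bound_aux a b h
    have hb : (0:ℝ) ≤ |a| := abs_nonneg a
    linarith
  · have := phi_bound_aux b a h
    rw [add_comm b a] at this
    have heq : (a+b) * Real.log |a+b| - b * Real.log |b| - a * Real.log |a|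
        = (a+b) * Real.log |a+b| - a * Real.log |a| - b * Real.log |b| := by ring
    rw [heq] at this
    have hb : (0:ℝ) ≤ |b| := abs_nonneg b
    linarith

private lemma mem_of_dom {f g : ℕ → ℝ} (hg : Memℓp g 2) (h : ∀ n, |f n| ≤ |g n|) :
    Memℓp f 2 := by
  apply memℓp_gen
  refine Summable.of_nonneg_of_le (fun n => Real.rpow_nonneg (norm_nonneg _) _)
    (fun n => Real.rpow_le_rpow (norm_nonneg _) ?_ (le_of_lt hp2)) (hg.summable hp2)
  simpa [Real.norm_eq_abs] using h n

private lemma norm_of_dom {f g : ℕ → ℝ} (hf : Memℓp f 2) (hg : Memℓp g 2)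
    (h : ∀ n, |f n| ≤ |g n|) :
    ‖(⟨f, hf⟩ : lp (fun _ : ℕ => ℝ) 2)‖ ≤ ‖(⟨g, hg⟩ : lp (fun _ : ℕ => ℝ) 2)‖ := by
  rw [lp.norm_eq_tsum_rpow hp2, lp.norm_eq_tsum_rpow hp2]
  apply Real.rpow_le_rpow (tsum_nonneg fun n => Real.rpow_nonneg (norm_nonneg _) _)
  · refine Summable.tsum_le_tsum (fun n => Real.rpow_le_rpow (norm_nonneg _) ?_ hp2.le)
      (hf.summable hp2) (hg.summable hp2)
    simpa [Real.norm_eq_abs] using h n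
  · positivity

private def absLp (x : lp (fun _ : ℕ => ℝ) 2) : lp (fun _ : ℕ => ℝ) 2 :=
  ⟨fun n => |x n|, by
    apply memℓp_gen
    simpa [Real.norm_eq_abs, abs_abs] using (lp.memℓp x).summable hp2⟩

private lemma absLp_apply (x : lp (fun _ : ℕ => ℝ) 2) (n : ℕ) : absLp x n = |x n| := rfl

private lemma absLp_norm (x : lp (fun _ : ℕ => ℝ) 2) : ‖absLp x‖ = ‖x‖ := by
  rw [lp.norm_eq_tsum_rpow hp2, lp.norm_eq_tsum_rpow hp2]
  congr 1
  refine tsum_congr fun n => ?_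
  rw [absLp_apply]
  simp [Real.norm_eq_abs, abs_abs]

private lemma KP_coord (y v : ℝ) (hv : 0 < v) :
    2 * y * Real.log (|y| / v) = 2 * (y * Real.log |y|) - 2 * (y * Real.log v) := by
  rcases eq_or_ne y 0 with h | h
  · simp [h]
  · rw [mul_assoc, Real.log_div (abs_ne_zero.mpr h) hv.ne']; ring

private lemma mk_apply (f : ℕ → ℝ) (hf : Memℓp f 2) (n : ℕ) :
    (⟨f, hf⟩ : lp (fun _ : ℕ => ℝ) 2) n = f n := rfl


private lemma coeff_norm {s r : ℝ} (hs : 0 < s) (hr : 0 < r) (hsr : s ≤ r) :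
    |2 * (Real.log s - Real.log r)| * s ≤ 2 * r := by
  have h1 : Real.log s ≤ Real.log r := Real.log_le_log hs hsr
  have h2 : |2 * (Real.log s - Real.log r)| = 2 * (Real.log r - Real.log s) := by
    rw [abs_mul, abs_of_nonneg (by norm_num : (0:ℝ) ≤ 2), abs_of_nonpos (by linarith)]
    ring
  rw [h2]
  have h3 : Real.log r - Real.log s = Real.log (r / s) := (Real.log_div hr.ne' hs.ne').symm
  rw [h3]
  have := ylog_le hs.le hr
  nlinarith [Real.log_nonneg ((one_le_div hs).mpr hsr)]


private lemma reduce (x z G : lp (fun _ : ℕ => ℝ) 2)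
    (hG : (KP (x + z) - KP x - KP z) = ⇑G)
    (hn : ‖G‖ ≤ 12 * (‖x‖ + ‖z‖)) :
    ∃ h : Memℓp (KP (x + z) - KP x - KP z) 2,
      ‖(⟨KP (x + z) - KP x - KP z, h⟩ : lp (fun _ : ℕ => ℝ) 2)‖ ≤ 12 * (‖x‖ + ‖z‖) := by
  have hmem : Memℓp (KP (x + z) - KP x - KP z) 2 := by rw [hG]; exact lp.memℓp G
  refine ⟨hmem, ?_⟩
  have he : (⟨KP (x + z) - KP x - KP z, hmem⟩ : lp (fun _ : ℕ => ℝ) 2) = G := lp.ext hG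
  rw [he]; exact hn

private lemma main_case (x z : lp (fun _ : ℕ => ℝ) 2) (hx : x ≠ 0) (hz : z ≠ 0)
    (hxz : x + z ≠ 0) :
    ∃ G : lp (fun _ : ℕ => ℝ) 2,
      (KP (x + z) - KP x - KP z) = ⇑G ∧ ‖G‖ ≤ 12 * (‖x‖ + ‖z‖) := by
  have hs : 0 < ‖x‖ := norm_pos_iff.mpr hx
  have ht : 0 < ‖z‖ := norm_pos_iff.mpr hz
  have hu : 0 < ‖x + z‖ := norm_pos_iff.mpr hxz
  have hr : 0 < ‖x‖ + ‖z‖ := by linarith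
  have hur : ‖x + z‖ ≤ ‖x‖ + ‖z‖ := norm_add_le x z
  set B : ℕ → ℝ := fun n => (x n + z n) * Real.log |x n + z n|
      - x n * Real.log |x n| - z n * Real.log |z n| with hBdef
  have hdom : ∀ n, |B n| ≤ |((3:ℝ) • (absLp x + absLp z)) n| := by
    intro n
    have happ : ((3:ℝ) • (absLp x + absLp z)) n = 3 * (|x n| + |z n|) := by
      change (3:ℝ) * (|x n| + |z n|) = _
      ring
    rw [happ, abs_of_nonneg (show (0:ℝ) ≤ 3 * (|x n| + |z n|) by positivity)]
    exact phi_bound (x n) (z n)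
  have hBmem : Memℓp B 2 := mem_of_dom (lp.memℓp _) hdom
  set Blp : lp (fun _ : ℕ => ℝ) 2 := (⟨B, hBmem⟩ : lp (fun _ : ℕ => ℝ) 2) with hBlp
  have hBnorm : ‖Blp‖ ≤ 3 * (‖x‖ + ‖z‖) := by
    have h1 : ‖Blp‖ ≤ ‖(⟨⇑((3:ℝ) • (absLp x + absLp z)),
        lp.memℓp ((3:ℝ) • (absLp x + absLp z))⟩ : lp (fun _ : ℕ => ℝ) 2)‖ :=
      norm_of_dom hBmem _ hdom
    have h2 : (⟨⇑((3:ℝ) • (absLp x + absLp z)), lp.memℓp _⟩ : lp (fun _ : ℕ => ℝ) 2)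
        = (3:ℝ) • (absLp x + absLp z) := lp.ext rfl
    rw [h2] at h1
    have h3 : ‖(3:ℝ) • (absLp x + absLp z)‖ ≤ 3 * (‖x‖ + ‖z‖) := by
      rw [norm_smul, Real.norm_eq_abs]
      have := norm_add_le (absLp x) (absLp z)
      rw [absLp_norm, absLp_norm] at this
      rw [abs_of_nonneg (by norm_num : (0:ℝ) ≤ 3)]
      nlinarith
    linarith
  refine ⟨(2:ℝ) • Blp + ((2 * (Real.log ‖x‖ - Real.log (‖x‖ + ‖z‖))) • x
      + (2 * (Real.log ‖z‖ - Real.log (‖x‖ + ‖z‖))) • z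
      + (2 * (Real.log (‖x‖ + ‖z‖) - Real.log ‖x + z‖)) • (x + z)), ?_, ?_⟩
  · funext n
    simp only [KP, Pi.sub_apply, lp.coeFn_add, lp.coeFn_smul, Pi.add_apply, Pi.smul_apply,
      smul_eq_mul, hBlp, mk_apply, hBdef]
    rw [KP_coord (x n + z n) ‖x + z‖ hu, KP_coord (x n) ‖x‖ hs, KP_coord (z n) ‖z‖ ht]
    ring
  · have n1 : ‖(2:ℝ) • Blp‖ ≤ 6 * (‖x‖ + ‖z‖) := by
      rw [norm_smul, Real.norm_eq_abs, abs_of_nonneg (by norm_num : (0:ℝ) ≤ 2)]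
      linarith
    have n2 : ‖(2 * (Real.log ‖x‖ - Real.log (‖x‖ + ‖z‖))) • x‖ ≤ 2 * (‖x‖ + ‖z‖) := by
      rw [norm_smul, Real.norm_eq_abs]
      exact coeff_norm hs hr (by linarith [norm_nonneg z])
    have n3 : ‖(2 * (Real.log ‖z‖ - Real.log (‖x‖ + ‖z‖))) • z‖ ≤ 2 * (‖x‖ + ‖z‖) := by
      rw [norm_smul, Real.norm_eq_abs]
      exact coeff_norm ht hr (by linarith [norm_nonneg x])
    have n4 : ‖(2 * (Real.log (‖x‖ + ‖z‖) - Real.log ‖x + z‖)) • (x + z)‖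
        ≤ 2 * (‖x‖ + ‖z‖) := by
      rw [norm_smul, Real.norm_eq_abs]
      have h2 : |2 * (Real.log (‖x‖ + ‖z‖) - Real.log ‖x + z‖)|
          = 2 * (Real.log (‖x‖ + ‖z‖) - Real.log ‖x + z‖) := by
        rw [abs_of_nonneg]
        have := Real.log_le_log hu hur
        nlinarith
      rw [h2]
      have h3 : Real.log (‖x‖ + ‖z‖) - Real.log ‖x + z‖
          = Real.log ((‖x‖ + ‖z‖) / ‖x + z‖) := (Real.log_div hr.ne' hu.ne').symm
      rw [h3]
      have := ylog_le hu.le hr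
      nlinarith [Real.log_nonneg ((one_le_div hu).mpr hur)]
    calc ‖(2:ℝ) • Blp + ((2 * (Real.log ‖x‖ - Real.log (‖x‖ + ‖z‖))) • x
          + (2 * (Real.log ‖z‖ - Real.log (‖x‖ + ‖z‖))) • z
          + (2 * (Real.log (‖x‖ + ‖z‖) - Real.log ‖x + z‖)) • (x + z))‖
        ≤ ‖(2:ℝ) • Blp‖ + ‖(2 * (Real.log ‖x‖ - Real.log (‖x‖ + ‖z‖))) • x
          + (2 * (Real.log ‖z‖ - Real.log (‖x‖ + ‖z‖))) • z
          + (2 * (Real.log (‖x‖ + ‖z‖) - Real.log ‖x + z‖)) • (x + z)‖ := norm_add_le _ _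
      _ ≤ ‖(2:ℝ) • Blp‖ + (‖(2 * (Real.log ‖x‖ - Real.log (‖x‖ + ‖z‖))) • x
          + (2 * (Real.log ‖z‖ - Real.log (‖x‖ + ‖z‖))) • z‖
          + ‖(2 * (Real.log (‖x‖ + ‖z‖) - Real.log ‖x + z‖)) • (x + z)‖) := by
          linarith [norm_add_le ((2 * (Real.log ‖x‖ - Real.log (‖x‖ + ‖z‖))) • x
            + (2 * (Real.log ‖z‖ - Real.log (‖x‖ + ‖z‖))) • z)
            ((2 * (Real.log (‖x‖ + ‖z‖) - Real.log ‖x + z‖)) • (x + z))]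
      _ ≤ 12 * (‖x‖ + ‖z‖) := by
          have := norm_add_le ((2 * (Real.log ‖x‖ - Real.log (‖x‖ + ‖z‖))) • x)
            ((2 * (Real.log ‖z‖ - Real.log (‖x‖ + ‖z‖))) • z)
          linarith

/-- The Kalton–Peck map is quasilinear: for all `x, z ∈ ℓ₂`,
`KP(x+z) - KP x - KP z ∈ ℓ₂` and `‖KP(x+z) - KP x - KP z‖₂ ≤ C(‖x‖₂ + ‖z‖₂)`
for some absolute constant `C`. -/
theorem stmt18 : ∃ C > (0 : ℝ), ∀ x z : lp (fun _ : ℕ => ℝ) 2,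
    ∃ h : Memℓp (KP (x + z) - KP x - KP z) 2,
      ‖(⟨KP (x + z) - KP x - KP z, h⟩ : lp (fun _ : ℕ => ℝ) 2)‖ ≤ C * (‖x‖ + ‖z‖) := by
  refine ⟨12, by norm_num, ?_⟩
  intro x z
  rcases eq_or_ne x 0 with hx | hx
  · refine reduce x z 0 ?_ (by simp; positivity)
    funext n
    simp [hx, KP]
  rcases eq_or_ne z 0 with hz | hz
  · refine reduce x z 0 ?_ (by simp; positivity)
    funext n
    simp [hz, KP]
  rcases eq_or_ne (x + z) 0 with hxz | hxz
  · refine reduce x z 0 ?_ (by simp; positivity)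
    funext n
    have hz2 : z = -x := eq_neg_of_add_eq_zero_right hxz
    simp [hxz, hz2, KP, lp.coeFn_neg, abs_neg]
  · obtain ⟨G, hG, hn⟩ := main_case x z hx hz hxz
    exact reduce x z G hG hn
end
end
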